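/- arXiv:1205.0266 — 2 statements merged into one kernel-verified Lean document; each statement's English description precedes it below -/
import Mathlib

section
/- Let 0 → E' → E → E'' → 0 be a short exact sequence of finite free modules over a commutative ring. Then in the Grothendieck group K_0, the class λ_{-1}(E) := Σ_i (-1)^i [Λ^i E] satisfies λ_{-1}(E) = λ_{-1}(E') · λ_{-1}(E''), where multiplication is induced by tensor product. -/
/-!
A short exact sequence of free modules splits, so `rank E = a + b` with `a = rank E'` and
`b = rank E''`. In `K₀(R)` a free module of rank `r` has class `r • [R]`, and `⋀ⁿ` of a free
module of rank `r` is free of rank `r.choose n`. Over a nontrivial ring both sides therefore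
become `[R]` times `∑ₙ (-1)ⁿ (a + b).choose n` and `(∑ᵢ (-1)ⁱ a.choose i) * (∑ⱼ (-1)ʲ b.choose j)`
respectively, which agree since each alternating sum of binomial coefficients is `1` in rank
zero and `0` otherwise. Over the zero ring every class vanishes.
-/

open CategoryTheory

/-- The set of relations defining the Grothendieck group `K₀` of finitely generated
projective modules: for every short exact sequence `0 → A → B → C → 0` of finite
projective modules, we impose `[B] = [A] + [C]`. -/
def K0Rels (R : Type) [CommRing R] : AddSubgroup (FreeAbelianGroup (ModuleCat.{0} R)) :=
  AddSubgroup.closure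
    {x | ∃ (A B C : ModuleCat.{0} R),
      Module.Finite R A ∧ Module.Projective R A ∧
      Module.Finite R B ∧ Module.Projective R B ∧
      Module.Finite R C ∧ Module.Projective R C ∧
      ∃ (f : A →ₗ[R] B) (g : B →ₗ[R] C),
        Function.Injective f ∧ Function.Surjective g ∧ Function.Exact f g ∧
        x = FreeAbelianGroup.of B - FreeAbelianGroup.of A - FreeAbelianGroup.of C}

/-- The Grothendieck group `K₀(R)` of finite projective `R`-modules. -/
def K0 (R : Type) [CommRing R] : Type 1 :=
  FreeAbelianGroup (ModuleCat.{0} R) ⧸ K0Rels R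

noncomputable instance (R : Type) [CommRing R] : AddCommGroup (K0 R) :=
  QuotientAddGroup.Quotient.addCommGroup _

/-- The class of a module in `K₀(R)`. -/
def K0.cls (R : Type) [CommRing R] (M : Type) [AddCommGroup M] [Module R M] : K0 R :=
  QuotientAddGroup.mk (FreeAbelianGroup.of (ModuleCat.of R M))

lemma Module.finrank_eq_add_of_shortExact {R : Type*} [CommRing R] [StrongRankCondition R]
    {M₁ M₂ M₃ : Type*} [AddCommGroup M₁] [AddCommGroup M₂] [AddCommGroup M₃]
    [Module R M₁] [Module R M₂] [Module R M₃]
    [Module.Free R M₁] [Module.Finite R M₁] [Module.Free R M₃] [Module.Finite R M₃]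
    {f : M₁ →ₗ[R] M₂} {g : M₂ →ₗ[R] M₃}
    (hf : Function.Injective f) (hg : Function.Surjective g) (hfg : Function.Exact f g) :
    finrank R M₂ = finrank R M₁ + finrank R M₃ := by
  obtain ⟨s, hs⟩ := Module.projective_lifting_property g LinearMap.id hg
  rw [((hfg.splitSurjectiveEquiv hf) ⟨s, hs⟩).1.finrank_eq, Module.finrank_prod]

lemma Int.alternating_sum_range_choose_add (a b : ℕ) :
    ∑ n ∈ Finset.range (a + b + 1), (-1 : ℤ) ^ n * (a + b).choose n =
      (∑ i ∈ Finset.range (a + 1), (-1 : ℤ) ^ i * a.choose i) *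
        ∑ j ∈ Finset.range (b + 1), (-1 : ℤ) ^ j * b.choose j := by
  simp only [Int.alternating_sum_range_choose, Nat.add_eq_zero_iff]
  split_ifs <;> simp_all

namespace K0

open scoped TensorProduct

variable (R : Type) [CommRing R]

lemma cls_eq_add_of_shortExact (A B C : Type)
    [AddCommGroup A] [Module R A] [AddCommGroup B] [Module R B] [AddCommGroup C] [Module R C]
    [Module.Finite R A] [Module.Projective R A] [Module.Finite R B] [Module.Projective R B]
    [Module.Finite R C] [Module.Projective R C]
    (f : A →ₗ[R] B) (g : B →ₗ[R] C)
    (hf : Function.Injective f) (hg : Function.Surjective g) (hfg : Function.Exact f g) :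
    cls R B = cls R A + cls R C := by
  rw [← sub_eq_zero, ← sub_sub]
  exact (QuotientAddGroup.eq_zero_iff _).2 <| AddSubgroup.subset_closure
    ⟨.of R A, .of R B, .of R C, ‹_›, ‹_›, ‹_›, ‹_›, ‹_›, ‹_›, f, g, hf, hg, hfg, rfl⟩

lemma cls_punit : cls R PUnit = 0 := by
  have h := cls_eq_add_of_shortExact R PUnit PUnit PUnit 0 0
    (Function.injective_of_subsingleton _) (Function.surjective_to_subsingleton _)
    (fun _ => ⟨fun _ => ⟨0, Subsingleton.elim _ _⟩, fun _ => Subsingleton.elim _ _⟩)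
  exact left_eq_add.mp h

lemma cls_congr {A B : Type}
    [AddCommGroup A] [Module R A] [AddCommGroup B] [Module R B]
    [Module.Finite R A] [Module.Projective R A] [Module.Finite R B] [Module.Projective R B]
    (e : A ≃ₗ[R] B) : cls R A = cls R B := by
  have h := cls_eq_add_of_shortExact R PUnit A B 0 e
    (Function.injective_of_subsingleton _) e.surjective
    ((LinearMap.exact_zero_iff_injective _ _).2 e.injective)
  rwa [cls_punit, zero_add] at h

lemma cls_prod (A B : Type)
    [AddCommGroup A] [Module R A] [AddCommGroup B] [Module R B]
    [Module.Finite R A] [Module.Projective R A] [Module.Finite R B] [Module.Projective R B] :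
    cls R (A × B) = cls R A + cls R B :=
  cls_eq_add_of_shortExact R A (A × B) B (LinearMap.inl R A B) (LinearMap.snd R A B)
    LinearMap.inl_injective LinearMap.snd_surjective .inl_snd

lemma cls_eq_zero_of_subsingleton [Subsingleton R] (M : Type) [AddCommGroup M] [Module R M] :
    cls R M = 0 := by
  have : Subsingleton M := Module.subsingleton R M
  rw [cls_congr R (LinearEquiv.ofSubsingleton M PUnit), cls_punit]

lemma cls_fin_arrow (n : ℕ) : cls R (Fin n → R) = n • cls R R := by
  induction n with
  | zero => rw [cls_congr R (LinearEquiv.ofSubsingleton _ PUnit), cls_punit, zero_smul]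
  | succ n ih =>
    rw [← cls_congr R (Fin.consLinearEquiv R fun _ => R), cls_prod, ih, succ_nsmul']

lemma cls_eq_finrank_nsmul [StrongRankCondition R] (M : Type) [AddCommGroup M] [Module R M]
    [Module.Free R M] [Module.Finite R M] :
    cls R M = Module.finrank R M • cls R R := by
  rw [cls_congr R (Module.finBasis R M).equivFun, cls_fin_arrow]

lemma cls_exteriorPower [Nontrivial R] (M : Type) [AddCommGroup M] [Module R M]
    [Module.Free R M] [Module.Finite R M] (n : ℕ) :
    cls R (⋀[R]^n M) = (Module.finrank R M).choose n • cls R R := by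
  rw [cls_eq_finrank_nsmul, exteriorPower.finrank_eq]

lemma cls_tensorProduct_exteriorPower [Nontrivial R] (M N : Type)
    [AddCommGroup M] [Module R M] [AddCommGroup N] [Module R N]
    [Module.Free R M] [Module.Finite R M] [Module.Free R N] [Module.Finite R N] (i j : ℕ) :
    cls R (⋀[R]^i M ⊗[R] ⋀[R]^j N) =
      ((Module.finrank R M).choose i * (Module.finrank R N).choose j) • cls R R := by
  rw [cls_eq_finrank_nsmul, Module.finrank_tensorProduct, exteriorPower.finrank_eq,
    exteriorPower.finrank_eq]

end K0

open Finset TensorProduct in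
/-- **Multiplicativity of `λ₋₁` on short exact sequences.**
For a short exact sequence `0 → E' → E → E'' → 0` of finite free modules over a
commutative ring, one has `λ₋₁(E) = λ₋₁(E') · λ₋₁(E'')` in `K₀(R)`, where
`λ₋₁(E) = Σᵢ (-1)ⁱ [Λⁱ E]` and the product is induced by the tensor product, i.e.
`Σₙ (-1)ⁿ [Λⁿ E] = Σᵢ Σⱼ (-1)^(i+j) [Λⁱ E' ⊗ Λʲ E'']`. -/
theorem lambdaMinusOne_multiplicative_of_shortExact
    (R : Type) [CommRing R]
    (E' E E'' : Type) [AddCommGroup E'] [AddCommGroup E] [AddCommGroup E'']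
    [Module R E'] [Module R E] [Module R E'']
    [Module.Free R E'] [Module.Finite R E'] [Module.Free R E] [Module.Finite R E]
    [Module.Free R E''] [Module.Finite R E'']
    (f : E' →ₗ[R] E) (g : E →ₗ[R] E'')
    (hf : Function.Injective f) (hg : Function.Surjective g) (hfg : Function.Exact f g) :
    ∑ n ∈ range (Module.finrank R E + 1), ((-1 : ℤ) ^ n) • K0.cls R ↥(⋀[R]^n E) =
      ∑ i ∈ range (Module.finrank R E' + 1), ∑ j ∈ range (Module.finrank R E'' + 1),
        ((-1 : ℤ) ^ (i + j)) • K0.cls R (↥(⋀[R]^i E') ⊗[R] ↥(⋀[R]^j E'')) := by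
  rcases subsingleton_or_nontrivial R with hR | hR
  · simp [K0.cls_eq_zero_of_subsingleton]
  simp only [K0.cls_exteriorPower, K0.cls_tensorProduct_exteriorPower, ← natCast_zsmul, smul_smul,
    ← sum_smul]
  rw [Module.finrank_eq_add_of_shortExact hf hg hfg, Int.alternating_sum_range_choose_add,
    sum_mul_sum]
  simp only [pow_add, Nat.cast_mul, mul_mul_mul_comm]
end

section
/- Let R be a commutative ring, E a finite free R-module of rank r with a section s : R → E whose dual s^∨ : E^∨ → R generates a regular sequence locally (a regular section). Then the Koszul complex 0 → Λ^r E^∨ → ⋯ → Λ^2 E^∨ → E^∨ → R → R/I → 0 is exact, where I = Im(s^∨) and the differential sends e_1 ∧ ⋯ ∧ e_j to Σ_i (-1)^i s^∨(e_i) e_1 ∧ ⋯ ∧ ê_i ∧ ⋯ ∧ e_j. -/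
/-!
Let `fᵢ = σ (v i)` for a basis `v` of `E`. The monomials in `ι (v 0), …, ι (v (k - 1))` span a
subcomplex `K_k` of `(Λ E, σ ⌋ ·)`, the Koszul complex of `f₀, …, f_{k-1}`. Since
`K_{k+1} = K_k ⊕ ι (v k) * K_k` and `σ ⌋ (α + ι (v k) * β) = σ ⌋ α + f_k • β - ι (v k) * (σ ⌋ β)`,
`K_{k+1}` is the mapping cone of multiplication by `f_k` on `K_k`. By induction on `k`, `K_k` has
homology `R ⧸ (f₀, …, f_{k-1})` in degree `0` and none above, so the long exact sequence of the
cone shows that `K_{k+1}` is again such a resolution as soon as `f_k` is a nonzerodivisor on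
`R ⧸ (f₀, …, f_{k-1})`, which is what regularity of the sequence says.
-/

open CliffordAlgebra

namespace Koszul

open ExteriorAlgebra

variable {R E : Type*} [CommRing R] [AddCommGroup E] [Module R E]

local infixl:70 " ⌋ " => CliffordAlgebra.contractLeft (Q := (0 : QuadraticForm R E))

def wedgeSpan (v : ℕ → E) : ℕ → Submodule R (ExteriorAlgebra R E)
  | 0 => 1
  | k + 1 => wedgeSpan v k ⊔ (wedgeSpan v k).map (LinearMap.mulLeft R (ι R (v k)))

section WedgeSpan

variable (v : ℕ → E)

theorem mem_wedgeSpan_succ {k : ℕ} {x : ExteriorAlgebra R E} :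
    x ∈ wedgeSpan v (k + 1) ↔
      ∃ α ∈ wedgeSpan v k, ∃ β ∈ wedgeSpan v k, α + ι R (v k) * β = x := by
  simp [wedgeSpan, Submodule.mem_sup]

theorem ι_mul_mem_wedgeSpan_succ {k : ℕ} {x : ExteriorAlgebra R E} (hx : x ∈ wedgeSpan v k) :
    ι R (v k) * x ∈ wedgeSpan v (k + 1) :=
  (mem_wedgeSpan_succ v).2 ⟨0, zero_mem _, x, hx, zero_add _⟩

theorem wedgeSpan_mono : Monotone (wedgeSpan (R := R) v) :=
  monotone_nat_of_le_succ fun _ => le_sup_left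

theorem algebraMap_mem_wedgeSpan (c : R) (k : ℕ) :
    algebraMap R (ExteriorAlgebra R E) c ∈ wedgeSpan v k :=
  wedgeSpan_mono v k.zero_le <| Submodule.mem_one.2 ⟨c, rfl⟩

theorem one_mem_wedgeSpan (k : ℕ) : (1 : ExteriorAlgebra R E) ∈ wedgeSpan v k :=
  wedgeSpan_mono v k.zero_le (Submodule.one_le.1 le_rfl)

theorem ι_mul_mem_wedgeSpan {j k : ℕ} (hjk : j < k) {x : ExteriorAlgebra R E}
    (hx : x ∈ wedgeSpan v k) : ι R (v j) * x ∈ wedgeSpan v k := by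
  induction k generalizing x with
  | zero => cases hjk
  | succ k ih =>
    obtain ⟨α, hα, β, hβ, rfl⟩ := (mem_wedgeSpan_succ v).1 hx
    rw [mul_add]
    rcases (Nat.lt_succ_iff_lt_or_eq.1 hjk) with hjk | rfl
    · have hswap : ι R (v j) * (ι R (v k) * β) = ι R (v k) * -(ι R (v j) * β) := by
        rw [mul_neg, ← mul_assoc, ← mul_assoc, ← neg_mul,
          eq_neg_of_add_eq_zero_left (ι_add_mul_swap (v j) (v k))]
      rw [hswap]
      exact add_mem (wedgeSpan_mono v k.le_succ (ih hjk hα))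
        (ι_mul_mem_wedgeSpan_succ v (neg_mem (ih hjk hβ)))
    · rw [← mul_assoc, ι_sq_zero, zero_mul, add_zero]
      exact ι_mul_mem_wedgeSpan_succ v hα

theorem ι_mem_wedgeSpan {j k : ℕ} (hjk : j < k) : ι R (v j) ∈ wedgeSpan v k :=
  mul_one (ι R (v j)) ▸ ι_mul_mem_wedgeSpan v hjk (one_mem_wedgeSpan v k)

theorem wedgeSpan_eq_top {k : ℕ} (hv : Submodule.span R (v '' Set.Iio k) = ⊤) :
    wedgeSpan (R := R) v k = ⊤ := by
  suffices h : ∀ x m : ExteriorAlgebra R E, m ∈ wedgeSpan v k → x * m ∈ wedgeSpan v k by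
    refine eq_top_iff.2 fun x _ => ?_
    simpa using h x 1 (one_mem_wedgeSpan v k)
  intro x
  induction x using CliffordAlgebra.induction with
  | algebraMap c =>
    intro m hm
    rw [Algebra.algebraMap_eq_smul_one, smul_mul_assoc, one_mul]
    exact Submodule.smul_mem _ c hm
  | ι y =>
    have hy : y ∈ Submodule.span R (v '' Set.Iio k) := hv ▸ Submodule.mem_top
    induction hy using Submodule.span_induction with
    | mem y hy =>
      obtain ⟨j, hj, rfl⟩ := hy
      exact fun m hm => ι_mul_mem_wedgeSpan v hj hm
    | zero => simp
    | add y z _ _ hy hz =>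
      exact fun m hm => by simpa [add_mul] using add_mem (hy m hm) (hz m hm)
    | smul c y _ hy => exact fun m hm => by simpa using Submodule.smul_mem _ c (hy m hm)
  | mul x y hx hy => exact fun m hm => mul_assoc x y m ▸ hx _ (hy m hm)
  | add x y hx hy => exact fun m hm => add_mul x y m ▸ add_mem (hx m hm) (hy m hm)

theorem contractLeft_mem_wedgeSpan (d : Module.Dual R E) {k : ℕ} {x : ExteriorAlgebra R E}
    (hx : x ∈ wedgeSpan v k) : d ⌋ x ∈ wedgeSpan v k := by
  induction k generalizing x with
  | zero =>
    obtain ⟨c, rfl⟩ := Submodule.mem_one.1 hx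
    simp
  | succ k ih =>
    obtain ⟨α, hα, β, hβ, rfl⟩ := (mem_wedgeSpan_succ v).1 hx
    rw [map_add, contractLeft_ι_mul, sub_eq_add_neg, ← mul_neg, ← add_assoc]
    exact add_mem (wedgeSpan_mono v k.le_succ (add_mem (ih hα) (Submodule.smul_mem _ _ hβ)))
      (ι_mul_mem_wedgeSpan_succ v (neg_mem (ih hβ)))

theorem contractLeft_eq_zero_of_mem_wedgeSpan {d : Module.Dual R E} {k : ℕ}
    (hd : ∀ i < k, d (v i) = 0) {x : ExteriorAlgebra R E} (hx : x ∈ wedgeSpan v k) :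
    d ⌋ x = 0 := by
  induction k generalizing x with
  | zero =>
    obtain ⟨c, rfl⟩ := Submodule.mem_one.1 hx
    simp
  | succ k ih =>
    obtain ⟨α, hα, β, hβ, rfl⟩ := (mem_wedgeSpan_succ v).1 hx
    have hd' : ∀ i < k, d (v i) = 0 := fun i hi => hd i (hi.trans k.lt_succ_self)
    rw [map_add, contractLeft_ι_mul, ih hd' hα, ih hd' hβ, hd k k.lt_succ_self]
    simp

theorem eq_zero_of_add_ι_mul_eq_zero {k : ℕ}
    (hδ : ∃ δ : Module.Dual R E, δ (v k) = 1 ∧ ∀ i < k, δ (v i) = 0)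
    {α β : ExteriorAlgebra R E} (hα : α ∈ wedgeSpan v k) (hβ : β ∈ wedgeSpan v k)
    (h : α + ι R (v k) * β = 0) : α = 0 ∧ β = 0 := by
  obtain ⟨δ, hδk, hδ⟩ := hδ
  -- `δ ⌋ ·` kills `wedgeSpan v k` and sends `ι (v k) * β` to `β`
  have hβ0 : β = 0 := by
    simpa [contractLeft_ι_mul, hδk, contractLeft_eq_zero_of_mem_wedgeSpan v hδ hα,
      contractLeft_eq_zero_of_mem_wedgeSpan v hδ hβ] using congrArg (δ ⌋ ·) h
  exact ⟨by simpa [hβ0] using h, hβ0⟩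

end WedgeSpan

section Homology

variable (σ : Module.Dual R E) (v : ℕ → E)

/-- Exactness of `(wedgeSpan v k, σ ⌋ ·)` in positive degrees, stated for non-homogeneous
elements. -/
def KoszulExactAtPos (k : ℕ) : Prop :=
  ∀ x ∈ wedgeSpan v k, σ ⌋ x = 0 →
    ∃ y ∈ wedgeSpan v k, ∃ c : R, x = σ ⌋ y + algebraMap R (ExteriorAlgebra R E) c

/-- Exactness at `R` of `wedgeSpan v k → R → R ⧸ (σ (v 0), …, σ (v (k - 1)))`; the reverse
inclusion is automatic. -/
def KoszulExactAtZero (k : ℕ) : Prop :=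
  ∀ x ∈ wedgeSpan v k, ∀ c : R, σ ⌋ x = algebraMap R (ExteriorAlgebra R E) c →
    c ∈ Ideal.span ((σ ∘ v) '' Set.Iio k)

theorem koszulExactAtPos_zero : KoszulExactAtPos σ v 0 := by
  rintro x hx -
  obtain ⟨c, rfl⟩ := Submodule.mem_one.1 hx
  exact ⟨0, zero_mem _, c, by simp⟩

theorem koszulExactAtZero_zero : KoszulExactAtZero σ v 0 := by
  rintro x hx c hc
  obtain ⟨c', rfl⟩ := Submodule.mem_one.1 hx
  rw [contractLeft_algebraMap, eq_comm,
    (algebraMap_leftInverse E).injective.eq_iff' (map_zero _)] at hc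
  exact hc ▸ zero_mem _

theorem exists_contractLeft_eq_algebraMap {k : ℕ} {c : R}
    (hc : c ∈ Ideal.span ((σ ∘ v) '' Set.Iio k)) :
    ∃ y ∈ wedgeSpan v k, σ ⌋ y = algebraMap R (ExteriorAlgebra R E) c := by
  induction hc using Submodule.span_induction with
  | mem c hc =>
    obtain ⟨i, hi, rfl⟩ := hc
    exact ⟨ι R (v i), ι_mem_wedgeSpan v hi, contractLeft_ι 0 σ (v i)⟩
  | zero => exact ⟨0, zero_mem _, by simp⟩
  | add a b _ _ ha hb =>
    obtain ⟨y, hy, hya⟩ := ha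
    obtain ⟨z, hz, hzb⟩ := hb
    exact ⟨y + z, add_mem hy hz, by rw [map_add, map_add, hya, hzb]⟩
  | smul a b _ hb =>
    obtain ⟨y, hy, hyb⟩ := hb
    exact ⟨a • y, Submodule.smul_mem _ a hy,
      by rw [map_smul, hyb, smul_eq_mul, map_mul, Algebra.smul_def]⟩

theorem contractLeft_add_ι_mul_eq_algebraMap {k : ℕ}
    (hδ : ∃ δ : Module.Dual R E, δ (v k) = 1 ∧ ∀ i < k, δ (v i) = 0)
    {α β : ExteriorAlgebra R E} (hα : α ∈ wedgeSpan v k) (hβ : β ∈ wedgeSpan v k) {c : R}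
    (h : σ ⌋ (α + ι R (v k) * β) = algebraMap R (ExteriorAlgebra R E) c) :
    σ ⌋ α + σ (v k) • β = algebraMap R (ExteriorAlgebra R E) c ∧ σ ⌋ β = 0 := by
  have hsplit : (σ ⌋ α + σ (v k) • β - algebraMap R (ExteriorAlgebra R E) c) +
      ι R (v k) * -(σ ⌋ β) = 0 := by
    rw [← h, map_add, contractLeft_ι_mul, mul_neg]
    abel
  obtain ⟨h₁, h₂⟩ := eq_zero_of_add_ι_mul_eq_zero v hδ
    (sub_mem (add_mem (contractLeft_mem_wedgeSpan v σ hα) (Submodule.smul_mem _ _ hβ))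
      (algebraMap_mem_wedgeSpan v c k))
    (neg_mem (contractLeft_mem_wedgeSpan v σ hβ)) hsplit
  exact ⟨sub_eq_zero.1 h₁, neg_eq_zero.1 h₂⟩

/-- Multiplication by `σ (v k)` is injective on the homology of `wedgeSpan v k`, which is
`R ⧸ (σ (v 0), …, σ (v (k - 1)))` in degree `0` and vanishes above. -/
theorem exists_contractLeft_eq_of_smul_eq_contractLeft {k : ℕ}
    (hpos : KoszulExactAtPos σ v k) (hzero : KoszulExactAtZero σ v k)
    (hreg : IsSMulRegular (R ⧸ Ideal.span ((σ ∘ v) '' Set.Iio k)) (σ (v k)))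
    {β γ : ExteriorAlgebra R E} (hβ : β ∈ wedgeSpan v k) (hDβ : σ ⌋ β = 0)
    (hγ : γ ∈ wedgeSpan v k) (hDγ : σ ⌋ γ = σ (v k) • β) :
    ∃ y ∈ wedgeSpan v k, σ ⌋ y = β := by
  obtain ⟨y, hy, a, rfl⟩ := hpos β hβ hDβ
  have ha : σ (v k) • a ∈ Ideal.span ((σ ∘ v) '' Set.Iio k) := by
    refine hzero (γ - σ (v k) • y) (sub_mem hγ (Submodule.smul_mem _ _ hy)) _ ?_
    rw [map_sub, map_smul, hDγ, smul_add, add_sub_cancel_left, Algebra.smul_def, ← map_mul,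
      smul_eq_mul]
  obtain ⟨z, hz, hDz⟩ := exists_contractLeft_eq_algebraMap σ v
    (mem_of_isSMulRegular_quotient_of_smul_mem hreg ha)
  exact ⟨y + z, add_mem hy hz, by rw [map_add, hDz]⟩

theorem KoszulExactAtPos.succ {k : ℕ}
    (hδ : ∃ δ : Module.Dual R E, δ (v k) = 1 ∧ ∀ i < k, δ (v i) = 0)
    (hpos : KoszulExactAtPos σ v k) (hzero : KoszulExactAtZero σ v k)
    (hreg : IsSMulRegular (R ⧸ Ideal.span ((σ ∘ v) '' Set.Iio k)) (σ (v k))) :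
    KoszulExactAtPos σ v (k + 1) := by
  intro x hx hDx
  obtain ⟨α, hα, β, hβ, rfl⟩ := (mem_wedgeSpan_succ v).1 hx
  obtain ⟨hDα, hDβ⟩ := contractLeft_add_ι_mul_eq_algebraMap σ v hδ hα hβ (c := 0)
    (by rw [hDx, map_zero])
  rw [map_zero, add_eq_zero_iff_eq_neg] at hDα
  obtain ⟨γ, hγ, rfl⟩ := exists_contractLeft_eq_of_smul_eq_contractLeft σ v hpos hzero hreg
    hβ hDβ (neg_mem hα) (by rw [map_neg, hDα, neg_neg])
  obtain ⟨y, hy, c, hyc⟩ := hpos (α + σ (v k) • γ) (add_mem hα (Submodule.smul_mem _ _ hγ))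
    (by rw [map_add, map_smul, hDα, neg_add_cancel])
  refine ⟨y - ι R (v k) * γ,
    sub_mem (wedgeSpan_mono v k.le_succ hy) (ι_mul_mem_wedgeSpan_succ v hγ), c, ?_⟩
  rw [map_sub, contractLeft_ι_mul, eq_sub_of_add_eq hyc]
  abel

theorem KoszulExactAtZero.succ {k : ℕ}
    (hδ : ∃ δ : Module.Dual R E, δ (v k) = 1 ∧ ∀ i < k, δ (v i) = 0)
    (hpos : KoszulExactAtPos σ v k) (hzero : KoszulExactAtZero σ v k) :
    KoszulExactAtZero σ v (k + 1) := by
  intro x hx c hDx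
  obtain ⟨α, hα, β, hβ, rfl⟩ := (mem_wedgeSpan_succ v).1 hx
  obtain ⟨hDα, hDβ⟩ := contractLeft_add_ι_mul_eq_algebraMap σ v hδ hα hβ hDx
  obtain ⟨y, hy, a, rfl⟩ := hpos β hβ hDβ
  have hca : c - σ (v k) * a ∈ Ideal.span ((σ ∘ v) '' Set.Iio k) := by
    refine hzero (α + σ (v k) • y) (add_mem hα (Submodule.smul_mem _ _ hy)) _ ?_
    rw [map_add, map_smul, eq_sub_of_add_eq hDα, map_sub, map_mul, ← Algebra.smul_def]
    module
  have hmono : Ideal.span ((σ ∘ v) '' Set.Iio k) ≤ Ideal.span ((σ ∘ v) '' Set.Iio (k + 1)) :=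
    Ideal.span_mono (Set.image_mono (Set.Iio_subset_Iio k.le_succ))
  have hk : σ (v k) ∈ Ideal.span ((σ ∘ v) '' Set.Iio (k + 1)) :=
    Ideal.subset_span ⟨k, k.lt_succ_self, rfl⟩
  simpa using add_mem (hmono hca) (Ideal.mul_mem_right a _ hk)

theorem koszulExact_wedgeSpan {k : ℕ}
    (hδ : ∀ j < k, ∃ δ : Module.Dual R E, δ (v j) = 1 ∧ ∀ i < j, δ (v i) = 0)
    (hreg : ∀ j < k, IsSMulRegular (R ⧸ Ideal.span ((σ ∘ v) '' Set.Iio j)) (σ (v j))) :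
    KoszulExactAtPos σ v k ∧ KoszulExactAtZero σ v k := by
  induction k with
  | zero => exact ⟨koszulExactAtPos_zero σ v, koszulExactAtZero_zero σ v⟩
  | succ k ih =>
    obtain ⟨hpos, hzero⟩ := ih (fun j hj => hδ j (hj.trans k.lt_succ_self))
      (fun j hj => hreg j (hj.trans k.lt_succ_self))
    exact ⟨hpos.succ σ v (hδ k k.lt_succ_self) hzero (hreg k k.lt_succ_self),
      hzero.succ σ v (hδ k k.lt_succ_self) hpos⟩

theorem koszul_exact_of_wedgeSpan_eq_top {k : ℕ} (htop : wedgeSpan (R := R) v k = ⊤)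
    (hpos : KoszulExactAtPos σ v k) (hzero : KoszulExactAtZero σ v k) :
    LinearMap.ker (CliffordAlgebra.contractLeft (Q := (0 : QuadraticForm R E)) σ) =
      LinearMap.range (CliffordAlgebra.contractLeft (Q := (0 : QuadraticForm R E)) σ) ⊔
        R ∙ 1 ∧
    LinearMap.range (CliffordAlgebra.contractLeft (Q := (0 : QuadraticForm R E)) σ) ⊓ R ∙ 1 =
      Submodule.map (Algebra.linearMap R (ExteriorAlgebra R E))
        (Ideal.span ((σ ∘ v) '' Set.Iio k)) := by
  have hmem : ∀ x, x ∈ wedgeSpan v k := fun x => htop ▸ Submodule.mem_top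
  rw [← Submodule.one_eq_span]
  refine ⟨le_antisymm (fun x hx => ?_) (sup_le ?_ ?_), le_antisymm ?_ ?_⟩
  · obtain ⟨y, -, c, rfl⟩ := hpos x (hmem x) hx
    exact add_mem (Submodule.mem_sup_left ⟨y, rfl⟩)
      (Submodule.mem_sup_right (Submodule.mem_one.2 ⟨c, rfl⟩))
  · rintro _ ⟨y, rfl⟩
    exact contractLeft_contractLeft σ y
  · rintro _ hx
    obtain ⟨c, rfl⟩ := Submodule.mem_one.1 hx
    exact contractLeft_algebraMap 0 σ c
  · rintro _ ⟨⟨y, rfl⟩, hy⟩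
    obtain ⟨c, hc⟩ := Submodule.mem_one.1 hy
    exact ⟨c, hzero y (hmem y) c hc.symm, hc⟩
  · rintro _ ⟨c, hc, rfl⟩
    obtain ⟨y, -, hy⟩ := exists_contractLeft_eq_algebraMap σ v hc
    exact ⟨⟨y, hy⟩, Submodule.mem_one.2 ⟨c, rfl⟩⟩

end Homology

section Basis

variable {r : ℕ} (b : Module.Basis (Fin r) R E) {v : ℕ → E}

theorem span_image_Iio_eq_top_of_basis (hv : ∀ i : Fin r, v i = b i) :
    Submodule.span R (v '' Set.Iio r) = ⊤ := by
  rw [← b.span_eq]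
  congr 1
  ext x
  exact ⟨fun ⟨i, hi, hx⟩ => ⟨⟨i, hi⟩, hx ▸ (hv ⟨i, hi⟩).symm⟩,
    fun ⟨i, hx⟩ => ⟨i, i.isLt, hx ▸ hv i⟩⟩

theorem exists_dual_of_basis (hv : ∀ i : Fin r, v i = b i) {j : ℕ} (hj : j < r) :
    ∃ δ : Module.Dual R E, δ (v j) = 1 ∧ ∀ i < j, δ (v i) = 0 := by
  refine ⟨b.coord ⟨j, hj⟩, by simp [hv ⟨j, hj⟩], fun i hi => ?_⟩
  rw [hv ⟨i, hi.trans hj⟩, b.coord_apply, b.repr_self,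
    Finsupp.single_eq_of_ne (by simpa [Fin.ext_iff] using hi.ne')]

end Basis

theorem setOf_mem_take_ofFn {α : Type*} {r : ℕ} {g : Fin r → α} {f : ℕ → α}
    (hf : ∀ i : Fin r, f i = g i) {j : ℕ} (hj : j ≤ r) :
    {x | x ∈ (List.ofFn g).take j} = f '' Set.Iio j := by
  ext x
  simp only [Set.mem_ofPred_eq, List.mem_take_iff_getElem, List.getElem_ofFn, List.length_ofFn,
    Set.mem_image, Set.mem_Iio, lt_min_iff]
  exact ⟨fun ⟨i, ⟨hij, hir⟩, hx⟩ => ⟨i, hij, hf ⟨i, hir⟩ ▸ hx⟩,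
    fun ⟨i, hij, hx⟩ => ⟨i, ⟨hij, hij.trans_le hj⟩, hf ⟨i, hij.trans_le hj⟩ ▸ hx⟩⟩

theorem isSMulRegular_of_isWeaklyRegular_ofFn {r : ℕ} {g : Fin r → R} {f : ℕ → R}
    (hf : ∀ i : Fin r, f i = g i) (hreg : RingTheory.Sequence.IsWeaklyRegular R (List.ofFn g))
    {j : ℕ} (hj : j < r) : IsSMulRegular (R ⧸ Ideal.span (f '' Set.Iio j)) (f j) := by
  have h := hreg.regular_mod_prev j (by simpa using hj)
  rwa [Ideal.ofList, setOf_mem_take_ofFn hf hj.le, Ideal.smul_eq_mul, Ideal.mul_top,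
    List.getElem_ofFn, ← hf] at h

end Koszul

open Koszul

/-- **Exactness of the Koszul complex of a regular section.**
Let `E` be a finite free `R`-module of rank `r` (with basis `b`), and
`σ : E → R` a linear form (the dual of a section) whose coordinates
`σ(b 0), …, σ(b (r-1))` form a regular sequence in `R` (a *regular section*).
The Koszul complex `0 → Λ^r E → ⋯ → Λ² E → E → R` with differential
`e₁ ∧ ⋯ ∧ eⱼ ↦ Σᵢ (-1)ⁱ σ(eᵢ) e₁ ∧ ⋯ ∧ êᵢ ∧ ⋯ ∧ eⱼ` is the contraction operator
`D = σ ⌋ -` on the exterior algebra `Λ E` (which lowers exterior degree by one).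
Exactness of the augmented complex
`0 → Λ^r E → ⋯ → E → R → R/I → 0` (where `I = Im σ = (σ(b 0), …, σ(b (r-1)))`)
is expressed by:
* `ker D = im D ⊔ R·1` (exactness in all positive exterior degrees), and
* `im D ⊓ R·1 = I·1` (the zeroth homology is exactly `R/I`). -/
theorem koszul_complex_exact_of_regular_section
    (R : Type*) [CommRing R] (E : Type*) [AddCommGroup E] [Module R E]
    (r : ℕ) (b : Module.Basis (Fin r) R E)
    (σ : Module.Dual R E)
    (hreg : RingTheory.Sequence.IsRegular R (List.ofFn fun i => σ (b i))) :
    (LinearMap.ker (contractLeft (Q := (0 : QuadraticForm R E)) σ) =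
      LinearMap.range (contractLeft (Q := (0 : QuadraticForm R E)) σ) ⊔
        Submodule.span R {(1 : ExteriorAlgebra R E)}) ∧
    (LinearMap.range (contractLeft (Q := (0 : QuadraticForm R E)) σ) ⊓
        Submodule.span R {(1 : ExteriorAlgebra R E)} =
      Submodule.map (Algebra.linearMap R (ExteriorAlgebra R E))
        (Ideal.span (Set.range fun i => σ (b i)))) := by
  let v : ℕ → E := fun i => if h : i < r then b ⟨i, h⟩ else 0
  have hv : ∀ i : Fin r, v i = b i := fun i => dif_pos i.isLt
  have hf : ∀ i : Fin r, (σ ∘ v) i = σ (b i) := fun i => congrArg σ (hv i)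
  obtain ⟨hpos, hzero⟩ := koszulExact_wedgeSpan σ v (fun j hj => exists_dual_of_basis b hv hj)
    (fun j hj => isSMulRegular_of_isWeaklyRegular_ofFn hf hreg.toIsWeaklyRegular hj)
  have hI : Set.range (fun i => σ (b i)) = (σ ∘ v) '' Set.Iio r := by
    rw [← setOf_mem_take_ofFn hf le_rfl, List.take_of_length_le (by simp)]
    ext
    simp [List.mem_ofFn]
  rw [hI]
  exact koszul_exact_of_wedgeSpan_eq_top σ v
    (wedgeSpan_eq_top v (span_image_Iio_eq_top_of_basis b hv)) hpos hzero
end
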